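/- Let z̃ : [0, ∞) → [0, ∞) be the function with z̃(0) = 0 and, for r > 0, z̃(r) equal to the unique z > 0 satisfying z(exp(z) − 1)/(exp(z) − z − 1) = 2 + r. Then z̃(r) = 3r + O(r²) as r → 0+, i.e. the function r ↦ z̃(r) − 3r is O(r²) as r → 0 within [0, ∞). -/

import Mathlib

/-!
The defining equation says `r * (e^z - z - 1) = (z - 2) e^z + z + 2` for `z = z̃ r`, and for `z > 0`
this forces `z ≤ 3 r ≤ z + z²`, whence `|z̃ r - 3 r| ≤ z̃(r)² ≤ 9 r²`. After clearing the positive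
factor `e^z - z - 1`, the upper bound is `(z - 3) e^z + z²/2 + 2z + 3 ≥ 0`, a function vanishing
at `0` together with its first derivative and whose second derivative `(z - 1) e^z + 1` is
nonnegative; the lower bound follows from the cubic Taylor lower bound for `e^z`.
-/

open Real Filter Set Topology Asymptotics

lemma monotoneOn_Ici_of_hasDerivAt_nonneg {f f' : ℝ → ℝ} {a : ℝ}
    (hf : ∀ x, a ≤ x → HasDerivAt f (f' x) x) (hf' : ∀ x, a < x → 0 ≤ f' x) :
    MonotoneOn f (Ici a) :=
  monotoneOn_of_hasDerivWithinAt_nonneg (convex_Ici a)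
    (fun x hx => (hf x hx).continuousAt.continuousWithinAt)
    (fun x hx => (hf x (le_of_lt (by simpa using hx))).hasDerivWithinAt)
    (fun x hx => hf' x (by simpa using hx))

lemma sub_one_mul_exp_add_one_nonneg (x : ℝ) : 0 ≤ (x - 1) * exp x + 1 := by
  have h := mul_le_mul_of_nonneg_right (one_sub_le_exp_neg x) (exp_pos x).le
  rw [← exp_add, neg_add_cancel, exp_zero] at h
  linarith

lemma sub_two_mul_exp_add_nonneg {x : ℝ} (hx : 0 ≤ x) : 0 ≤ (x - 2) * exp x + x + 2 := by
  have hmono : MonotoneOn (fun x => (x - 2) * exp x + x + 2) (Ici 0) :=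
    monotoneOn_Ici_of_hasDerivAt_nonneg
      (fun x _ => (((hasDerivAt_id' x).sub_const 2).mul (hasDerivAt_exp x)).add
        (hasDerivAt_id' x) |>.add_const 2)
      (fun x _ => by linarith [sub_one_mul_exp_add_one_nonneg x])
  simpa using hmono self_mem_Ici hx hx

lemma sub_three_mul_exp_add_nonneg {x : ℝ} (hx : 0 ≤ x) :
    0 ≤ (x - 3) * exp x + x ^ 2 / 2 + 2 * x + 3 := by
  have hmono : MonotoneOn (fun x => (x - 3) * exp x + x ^ 2 / 2 + 2 * x + 3) (Ici 0) :=
    monotoneOn_Ici_of_hasDerivAt_nonneg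
      (fun x _ => ((((hasDerivAt_id' x).sub_const 3).mul (hasDerivAt_exp x)).add
        ((hasDerivAt_pow 2 x).div_const 2) |>.add ((hasDerivAt_id' x).const_mul 2)).add_const 3)
      (fun x hx => by
        have := sub_two_mul_exp_add_nonneg hx.le
        push_cast
        linarith)
  simpa using hmono self_mem_Ici hx hx

lemma cubic_le_mul_exp_of_nonneg {x : ℝ} (hx : 0 ≤ x) :
    x ^ 3 + 2 * x ^ 2 + 4 * x + 6 ≤ (x ^ 2 - 2 * x + 6) * exp x := by
  have htaylor := sum_le_exp_of_nonneg hx 4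
  simp only [Finset.sum_range_succ, Finset.sum_range_zero, Nat.factorial] at htaylor
  push_cast at htaylor
  have hq : 0 < x ^ 2 - 2 * x + 6 := by nlinarith [sq_nonneg (x - 1)]
  nlinarith [mul_le_mul_of_nonneg_left htaylor hq.le, pow_nonneg hx 4, pow_nonneg hx 5]

lemma exp_sub_self_sub_one_pos {z : ℝ} (hz : z ≠ 0) : 0 < exp z - z - 1 := by
  linarith [add_one_lt_exp hz]

lemma mul_exp_sub_self_sub_one_eq {z r : ℝ} (hz : z ≠ 0)
    (h : z * (exp z - 1) / (exp z - z - 1) = 2 + r) :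
    r * (exp z - z - 1) = (z - 2) * exp z + z + 2 := by
  rw [div_eq_iff (exp_sub_self_sub_one_pos hz).ne'] at h
  linarith

lemma le_three_mul_of_mul_exp_eq {z r : ℝ} (hz : 0 < z)
    (h : r * (exp z - z - 1) = (z - 2) * exp z + z + 2) : z ≤ 3 * r := by
  have key : (3 * r - z) * (exp z - z - 1) =
      2 * ((z - 3) * exp z + z ^ 2 / 2 + 2 * z + 3) := by
    linear_combination 3 * h
  nlinarith [sub_three_mul_exp_add_nonneg hz.le, exp_sub_self_sub_one_pos hz.ne']

lemma three_mul_le_add_sq_of_mul_exp_eq {z r : ℝ} (hz : 0 < z)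
    (h : r * (exp z - z - 1) = (z - 2) * exp z + z + 2) : 3 * r ≤ z + z ^ 2 := by
  have key : (z + z ^ 2 - 3 * r) * (exp z - z - 1) =
      (z ^ 2 - 2 * z + 6) * exp z - (z ^ 3 + 2 * z ^ 2 + 4 * z + 6) := by
    linear_combination -3 * h
  nlinarith [cubic_le_mul_exp_of_nonneg hz.le, exp_sub_self_sub_one_pos hz.ne']

/-- Let `z̃ : [0,∞) → [0,∞)` be the function with `z̃ 0 = 0` and, for
`r > 0`, `z̃ r` the unique `z > 0` with `z (exp z - 1)/(exp z - z - 1) = 2 + r`.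
Then `z̃ r = 3 r + O(r²)` as `r → 0` within `[0, ∞)`. -/
theorem karpSipser_ztilde_expansion (ztilde : ℝ → ℝ) (h0 : ztilde 0 = 0)
    (hz : ∀ r : ℝ, 0 < r → 0 < ztilde r ∧
      ztilde r * (Real.exp (ztilde r) - 1) / (Real.exp (ztilde r) - ztilde r - 1) = 2 + r) :
    (fun r : ℝ => ztilde r - 3 * r) =O[𝓝[≥] (0 : ℝ)] (fun r : ℝ => r ^ 2) := by
  refine isBigO_iff.mpr ⟨9, ?_⟩
  filter_upwards [self_mem_nhdsWithin] with r (hr : 0 ≤ r)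
  rcases hr.eq_or_lt with rfl | hr
  · simp [h0]
  obtain ⟨hpos, heq⟩ := hz r hr
  have hrel := mul_exp_sub_self_sub_one_eq hpos.ne' heq
  have hupper := le_three_mul_of_mul_exp_eq hpos hrel
  have hlower := three_mul_le_add_sq_of_mul_exp_eq hpos hrel
  rw [norm_pow, Real.norm_eq_abs, Real.norm_eq_abs, sq_abs, abs_le]
  constructor <;> nlinarith
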